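/- arXiv:1607.00355 — 3 statements merged into one kernel-verified Lean document; each statement's English description precedes it below -/
import Mathlib

section
/- For u ∈ (0,1), writing v = √(1-u²), the second derivative of φ satisfies φ''(u) = (1/ln 2)·(artanh(v) - v)/v³, where φ(u) = H((1 - √(1-u²))/2). -/
open Real

noncomputable def binEnt (q : ℝ) : ℝ := -(q * Real.logb 2 q) - (1 - q) * Real.logb 2 (1 - q)

noncomputable def Bh (q : ℝ) : ℝ := 2 * Real.sqrt (q * (1 - q))

noncomputable def phi (u : ℝ) : ℝ := binEnt ((1 - Real.sqrt (1 - u ^ 2)) / 2)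
noncomputable def artanh (v : ℝ) : ℝ := (1/2) * Real.log ((1 + v) / (1 - v))

open Filter Topology

/-! With `v = √(1 - u²)` and `q = (1 - v) / 2`, the entropy derivative is
`H'(q) = log₂ ((1 - q) / q) = 2 artanh v / ln 2` and `dq/du = u / (2v)`, so
`φ'(u) = (u / v) · artanh v / ln 2`. Differentiating once more, `d(u/v)/du = 1/v³` (as `u² + v² = 1`)
and `d(artanh v)/du = (1 / (1 - v²)) · (-u / v) = -1 / (u v)`, which gives `(artanh v - v) / (v³ ln 2)`. -/

lemma binEnt_eq_binEntropy_div_log_two : binEnt = fun q => binEntropy q / log 2 := by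
  funext q
  simp only [binEnt, binEntropy, logb, log_inv]
  ring

lemma hasDerivAt_binEnt {q : ℝ} (hq₀ : q ≠ 0) (hq₁ : q ≠ 1) :
    HasDerivAt binEnt ((log (1 - q) - log q) / log 2) q := by
  rw [binEnt_eq_binEntropy_div_log_two]
  exact (hasDerivAt_binEntropy hq₀ hq₁).div_const _

lemma hasDerivAt_artanh {v : ℝ} (hv : v ^ 2 < 1) :
    HasDerivAt _root_.artanh (1 / (1 - v ^ 2)) v := by
  have hv_add : 1 + v ≠ 0 := by nlinarith
  have hv_sub : 1 - v ≠ 0 := by nlinarith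
  have hv_sq_ne : 1 - v ^ 2 ≠ 0 := by linarith
  have h_ratio : HasDerivAt (fun w => (1 + w) / (1 - w))
      ((1 * (1 - v) - (1 + v) * -1) / (1 - v) ^ 2) v :=
    ((hasDerivAt_id v).const_add 1).div ((hasDerivAt_id v).const_sub 1) hv_sub
  refine ((h_ratio.log (div_ne_zero hv_add hv_sub)).const_mul (1 / 2)).congr_deriv ?_
  field_simp
  ring

lemma log_one_sub_sub_log_of_half_one_sub {v : ℝ} (hv_add : 1 + v ≠ 0) (hv_sub : 1 - v ≠ 0) :
    log (1 - (1 - v) / 2) - log ((1 - v) / 2) = 2 * _root_.artanh v := by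
  rw [← log_div (by contrapose! hv_add; linarith) (by contrapose! hv_sub; linarith)]
  unfold _root_.artanh
  field_simp
  congr 2
  ring

lemma hasDerivAt_sqrt_one_sub_sq {u : ℝ} (hu : u ^ 2 < 1) :
    HasDerivAt (fun y => √(1 - y ^ 2)) (-u / √(1 - u ^ 2)) u := by
  have h_pos : 0 < 1 - u ^ 2 := by linarith
  refine (((hasDerivAt_pow 2 u).const_sub 1).sqrt h_pos.ne').congr_deriv ?_
  field_simp
  ring

noncomputable def phiDeriv (u : ℝ) : ℝ := u / √(1 - u ^ 2) * _root_.artanh √(1 - u ^ 2) / log 2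

lemma hasDerivAt_phi {u : ℝ} (hu₀ : u ≠ 0) (hu₁ : u ^ 2 < 1) :
    HasDerivAt phi (phiDeriv u) u := by
  set v := √(1 - u ^ 2)
  have hv_pos : 0 < v := sqrt_pos.mpr (by linarith)
  have hv_sq : v ^ 2 = 1 - u ^ 2 := sq_sqrt (by linarith)
  have hv_lt : v < 1 := by nlinarith [sq_pos_of_ne_zero hu₀]
  have hq : HasDerivAt (fun y => (1 - √(1 - y ^ 2)) / 2) (-(-u / v) / 2) u :=
    ((hasDerivAt_sqrt_one_sub_sq hu₁).const_sub 1).div_const 2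
  have hH := hasDerivAt_binEnt (q := (1 - v) / 2) (by linarith) (by linarith)
  refine (hH.comp u hq).congr_deriv ?_
  rw [log_one_sub_sub_log_of_half_one_sub (by linarith) (by linarith)]
  show _ = u / v * _root_.artanh v / log 2
  field_simp

lemma hasDerivAt_div_sqrt_one_sub_sq {u : ℝ} (hu : u ^ 2 < 1) :
    HasDerivAt (fun y => y / √(1 - y ^ 2)) (1 / √(1 - u ^ 2) ^ 3) u := by
  have hv_pos : 0 < √(1 - u ^ 2) := sqrt_pos.mpr (by linarith)
  have hv_sq : √(1 - u ^ 2) ^ 2 = 1 - u ^ 2 := sq_sqrt (by linarith)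
  refine ((hasDerivAt_id u).div (hasDerivAt_sqrt_one_sub_sq hu) hv_pos.ne').congr_deriv ?_
  field_simp
  simp only [id]
  linear_combination hv_sq

lemma hasDerivAt_artanh_sqrt_one_sub_sq {u : ℝ} (hu₀ : u ≠ 0) (hu₁ : u ^ 2 < 1) :
    HasDerivAt (fun y => _root_.artanh √(1 - y ^ 2)) (-1 / (u * √(1 - u ^ 2))) u := by
  have hv_sq : √(1 - u ^ 2) ^ 2 = 1 - u ^ 2 := sq_sqrt (by linarith)
  have hv_sq_lt : √(1 - u ^ 2) ^ 2 < 1 := by nlinarith [sq_pos_of_ne_zero hu₀]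
  refine ((hasDerivAt_artanh hv_sq_lt).comp u (hasDerivAt_sqrt_one_sub_sq hu₁)).congr_deriv ?_
  rw [hv_sq]
  field_simp
  ring

lemma hasDerivAt_phiDeriv {u : ℝ} (hu₀ : u ≠ 0) (hu₁ : u ^ 2 < 1) :
    HasDerivAt phiDeriv
      ((1 / log 2) * (_root_.artanh √(1 - u ^ 2) - √(1 - u ^ 2)) / √(1 - u ^ 2) ^ 3) u := by
  refine (((hasDerivAt_div_sqrt_one_sub_sq hu₁).mul
    (hasDerivAt_artanh_sqrt_one_sub_sq hu₀ hu₁)).div_const (log 2)).congr_deriv ?_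
  field_simp
  ring

theorem phi_second_deriv (u : ℝ) (hu : u ∈ Set.Ioo (0:ℝ) 1) :
    iteratedDeriv 2 phi u =
      (1 / Real.log 2) *
        (_root_.artanh (Real.sqrt (1 - u ^ 2)) - Real.sqrt (1 - u ^ 2)) /
          (Real.sqrt (1 - u ^ 2)) ^ 3 := by
  have h_sq_lt : ∀ x ∈ Set.Ioo (0 : ℝ) 1, x ^ 2 < 1 := fun x hx => by nlinarith [hx.1, hx.2]
  have h_deriv : deriv phi =ᶠ[𝓝 u] phiDeriv := by
    filter_upwards [Ioo_mem_nhds hu.1 hu.2] with x hx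
    exact (hasDerivAt_phi hx.1.ne' (h_sq_lt x hx)).deriv
  rw [iteratedDeriv_succ, iteratedDeriv_one, h_deriv.deriv_eq,
    (hasDerivAt_phiDeriv hu.1.ne' (h_sq_lt u hu)).deriv]
end

section
/- The function ψ(w) = φ(√w) = H((1 - √(1-w))/2) is strictly concave on [0,1]. -/
/-!
Write `s = √(1 - w)`, so that `ψ w = H((1 - s)/2)`. Since `H' q = log₂((1 - q)/q)` and
`ds/dw = -1/(2s)`, one gets `ψ'(w) = g(s) / (4 log 2)` with `g s = (log (1 + s) - log (1 - s)) / s`.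
The power series `g s = ∑ₖ 2 s^(2k) / (2k + 1)` shows that `g` is strictly increasing on `(0, 1)`;
as `s` decreases in `w`, `ψ'` is strictly decreasing, hence `ψ` is strictly concave.
-/

open Real Set

lemma binEnt_eq_binEntropy_div (q : ℝ) : binEnt q = binEntropy q / log 2 := by
  simp only [binEnt, binEntropy_eq_negMulLog_add_negMulLog_one_sub, negMulLog, logb]
  ring

lemma phi_sqrt_eq {w : ℝ} (hw : 0 ≤ w) : phi √w = binEntropy ((1 - √(1 - w)) / 2) / log 2 := by
  rw [phi, sq_sqrt hw, binEnt_eq_binEntropy_div]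

lemma sqrt_one_sub_mem_Ioo {w : ℝ} (hw : w ∈ Ioo 0 1) : √(1 - w) ∈ Ioo 0 1 :=
  ⟨sqrt_pos.2 (by linarith [hw.2]), (sqrt_lt' one_pos).2 (by linarith [hw.1])⟩

lemma hasSum_log_one_add_sub_log_one_sub_div {s : ℝ} (hs₀ : s ≠ 0) (hs₁ : |s| < 1) :
    HasSum (fun k : ℕ => 2 / (2 * k + 1) * s ^ (2 * k)) ((log (1 + s) - log (1 - s)) / s) := by
  have hterm (k : ℕ) :
      2 * (1 / (2 * k + 1)) * s ^ (2 * k + 1) / s = 2 / (2 * k + 1) * s ^ (2 * k) := by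
    rw [pow_succ]
    field_simp
  simpa only [hterm] using (hasSum_log_sub_log_of_abs_lt_one hs₁).div_const s

lemma strictMonoOn_log_one_add_sub_log_one_sub_div :
    StrictMonoOn (fun s : ℝ => (log (1 + s) - log (1 - s)) / s) (Ioo 0 1) := by
  rintro s ⟨hs₀, hs₁⟩ t ⟨ht₀, ht₁⟩ hst
  refine hasSum_lt (i := 1) (fun k => ?_) ?_
    (hasSum_log_one_add_sub_log_one_sub_div hs₀.ne' (abs_lt.2 ⟨by linarith, hs₁⟩))
    (hasSum_log_one_add_sub_log_one_sub_div ht₀.ne' (abs_lt.2 ⟨by linarith, ht₁⟩))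
  · gcongr
  · norm_num
    nlinarith

lemma hasDerivAt_binEntropy_one_sub_sqrt_one_sub_div_two {w : ℝ} (hw : w ∈ Ioo 0 1) :
    HasDerivAt (fun w => binEntropy ((1 - √(1 - w)) / 2))
      ((log (1 + √(1 - w)) - log (1 - √(1 - w))) / √(1 - w) / 4) w := by
  obtain ⟨hs₀, hs₁⟩ := sqrt_one_sub_mem_Ioo hw
  set s := √(1 - w) with hs
  have hq : HasDerivAt (fun w => (1 - √(1 - w)) / 2) (1 / (4 * s)) w := by
    refine ((((hasDerivAt_id w).const_sub 1).sqrt ?_).const_sub 1 |>.div_const 2).congr_deriv ?_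
    · exact sub_ne_zero.2 hw.2.ne'
    · simp only [id, ← hs]
      field_simp
      norm_num
  refine ((hasDerivAt_binEntropy (p := (1 - s) / 2) (by linarith) (by linarith)).comp w
    hq).congr_deriv ?_
  rw [show 1 - (1 - s) / 2 = (1 + s) / 2 by ring, log_div (by linarith) two_ne_zero,
    log_div (by linarith) two_ne_zero]
  field_simp
  ring

theorem psi_strictConcave :
    StrictConcaveOn ℝ (Set.Icc (0:ℝ) 1) (fun w => phi (Real.sqrt w)) := by
  refine StrictConcaveOn.congr ?_ fun w hw => (phi_sqrt_eq hw.1).symm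
  refine StrictAntiOn.strictConcaveOn_of_deriv (convex_Icc 0 1) (by fun_prop) ?_
  rw [interior_Icc]
  intro a ha b hb hab
  rw [((hasDerivAt_binEntropy_one_sub_sqrt_one_sub_div_two ha).div_const _).deriv,
    ((hasDerivAt_binEntropy_one_sub_sqrt_one_sub_div_two hb).div_const _).deriv]
  have hsqrt : √(1 - b) < √(1 - a) := sqrt_lt_sqrt (by linarith [hb.2]) (by linarith)
  have hlog2 : 0 < log 2 := log_pos one_lt_two
  gcongr ?_ / 4 / _
  exact strictMonoOn_log_one_add_sub_log_one_sub_div (sqrt_one_sub_mem_Ioo hb)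
    (sqrt_one_sub_mem_Ioo ha) hsqrt
end

section
/- Equality Z(W) = 1 - I(W) holds if and only if for every output y, either W(y|0)·W(y|1) = 0 or W(y|0) = W(y|1) (i.e., W is a binary erasure channel). -/
open Real

variable {Y : Type*} [Fintype Y]

noncomputable def symCap (W : Fin 2 → Y → ℝ) : ℝ :=
  ∑ y, ∑ x : Fin 2,
    (1/2) * W x y * Real.logb 2 (W x y / ((1/2) * W 0 y + (1/2) * W 1 y))

noncomputable def bhat (W : Fin 2 → Y → ℝ) : ℝ := ∑ y, Real.sqrt (W 0 y * W 1 y)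

/-!
For an output with `a = W(y|0)`, `b = W(y|1)`, write `a = m(1 + t)` and `b = m(1 - t)` with
`m = (a + b)/2`. That output contributes `m · entropyGap t / log 2` to `Z + I - 1`, and
`entropyGap t / log 2 = 2√(p(1-p)) - h₂(p)` at `p = (1 + t)/2`. The gap vanishes at `t = 0` together
with its derivative; its second derivative `(√(1-t²) - log 2)/√(1-t²)³` is positive up to
`t₀ = √(1 - log² 2)`, and beyond `t₀` the gap is strictly concave and vanishes at `t = 1`. So
`h₂(p) ≤ 2√(p(1-p))` with equality only for `t ∈ {-1, 0, 1}`, i.e. `ab = 0` or `a = b`, and summing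
over the outputs gives `Z + I ≥ 1` with equality exactly for erasure channels.
-/

open Set

noncomputable def entropyGap (t : ℝ) : ℝ :=
  log 2 * √(1 - t ^ 2) + ((1 + t) * log (1 + t) + (1 - t) * log (1 - t)) / 2 - log 2

noncomputable def entropyGapDeriv (t : ℝ) : ℝ :=
  -(log 2 * t / √(1 - t ^ 2)) + (log (1 + t) - log (1 - t)) / 2

lemma hasDerivAt_entropyGap {t : ℝ} (ht : t ∈ Ioo (-1 : ℝ) 1) :
    HasDerivAt entropyGap (entropyGapDeriv t) t := by
  have h₁ : 1 + t ≠ 0 := by linarith [ht.1]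
  have h₂ : 1 - t ≠ 0 := by linarith [ht.2]
  have hsq : 1 - t ^ 2 ≠ 0 := by nlinarith [ht.1, ht.2]
  have hplus : HasDerivAt (fun t => 1 + t) 1 t := (hasDerivAt_id' t).const_add 1
  have hminus : HasDerivAt (fun t => 1 - t) (-1) t := by
    simpa using (hasDerivAt_id' t).const_sub 1
  have hroot := ((hasDerivAt_pow 2 t).const_sub 1).sqrt hsq
  refine (((hroot.const_mul (log 2)).add (((hplus.mul (hplus.log h₁)).add
    (hminus.mul (hminus.log h₂))).div_const 2)).sub_const (log 2)).congr_deriv ?_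
  rw [entropyGapDeriv]
  field_simp
  ring

lemma hasDerivAt_entropyGapDeriv {t : ℝ} (ht : t ∈ Ioo (-1 : ℝ) 1) :
    HasDerivAt entropyGapDeriv ((√(1 - t ^ 2) - log 2) / √(1 - t ^ 2) ^ 3) t := by
  have h₁ : 1 + t ≠ 0 := by linarith [ht.1]
  have h₂ : 1 - t ≠ 0 := by linarith [ht.2]
  have hsq : 0 < 1 - t ^ 2 := by nlinarith [ht.1, ht.2]
  have hplus : HasDerivAt (fun t => 1 + t) 1 t := (hasDerivAt_id' t).const_add 1
  have hminus : HasDerivAt (fun t => 1 - t) (-1) t := by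
    simpa using (hasDerivAt_id' t).const_sub 1
  have hroot := ((hasDerivAt_pow 2 t).const_sub 1).sqrt hsq.ne'
  refine ((((hasDerivAt_id' t).const_mul (log 2)).div hroot (by positivity)).neg.add
    (((hplus.log h₁).sub (hminus.log h₂)).div_const 2)).congr_deriv ?_
  have hs : √(1 - t ^ 2) ^ 2 = 1 - t ^ 2 := sq_sqrt hsq.le
  field_simp
  linear_combination (2 * √(1 - t ^ 2) - 2 * log 2 * (1 - t ^ 2)) * hs

lemma continuous_entropyGap : Continuous entropyGap := by
  have h₁ := continuous_mul_log.comp (continuous_const_add (1 : ℝ))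
  have h₂ := continuous_mul_log.comp (continuous_sub_left (1 : ℝ))
  unfold entropyGap
  fun_prop

lemma entropyGap_zero : entropyGap 0 = 0 := by simp [entropyGap]

lemma entropyGap_one : entropyGap 1 = 0 := by norm_num [entropyGap]

lemma entropyGapDeriv_zero : entropyGapDeriv 0 = 0 := by simp [entropyGapDeriv]

lemma entropyGap_neg (t : ℝ) : entropyGap (-t) = entropyGap t := by
  simp only [entropyGap, neg_sq, sub_neg_eq_add, ← sub_eq_add_neg]
  ring

lemma entropyGap_abs (t : ℝ) : entropyGap |t| = entropyGap t := by
  rcases abs_choice t with h | h <;> rw [h]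
  exact entropyGap_neg t

noncomputable def entropyGapInflection : ℝ := √(1 - log 2 ^ 2)

local notation "t₀" => entropyGapInflection

lemma log_two_sq_lt_one : log 2 ^ 2 < 1 := by
  have := log_two_lt_d9
  have := log_pos one_lt_two
  nlinarith

lemma entropyGapInflection_mem : t₀ ∈ Ioo 0 1 := by
  have := log_pos one_lt_two
  refine ⟨sqrt_pos.2 (by linarith [log_two_sq_lt_one]), ?_⟩
  rw [entropyGapInflection, sqrt_lt' one_pos]
  nlinarith

lemma entropyGapInflection_sq : t₀ ^ 2 = 1 - log 2 ^ 2 :=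
  sq_sqrt (by linarith [log_two_sq_lt_one])

lemma log_two_lt_sqrt_one_sub_sq {t : ℝ} (ht : t ∈ Ico 0 t₀) : log 2 < √(1 - t ^ 2) := by
  rw [lt_sqrt (log_pos one_lt_two).le]
  nlinarith [ht.1, ht.2, entropyGapInflection_sq]

lemma sqrt_one_sub_sq_lt_log_two {t : ℝ} (ht : t ∈ Ioc t₀ 1) : √(1 - t ^ 2) < log 2 := by
  rw [sqrt_lt' (log_pos one_lt_two)]
  nlinarith [ht.1, ht.2, entropyGapInflection_sq, entropyGapInflection_mem.1]

lemma Icc_zero_entropyGapInflection_subset : Icc 0 t₀ ⊆ Ioo (-1) 1 := fun _ hx =>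
  ⟨by linarith [hx.1], hx.2.trans_lt entropyGapInflection_mem.2⟩

lemma entropyGapDeriv_pos {t : ℝ} (ht : t ∈ Ioc 0 t₀) : 0 < entropyGapDeriv t := by
  have hmono : StrictMonoOn entropyGapDeriv (Icc 0 t₀) := by
    refine strictMonoOn_of_deriv_pos (convex_Icc 0 _) (fun x hx => (hasDerivAt_entropyGapDeriv
      (Icc_zero_entropyGapInflection_subset hx)).continuousAt.continuousWithinAt) fun x hx => ?_
    rw [interior_Icc] at hx
    have hlt := log_two_lt_sqrt_one_sub_sq ⟨hx.1.le, hx.2⟩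
    rw [(hasDerivAt_entropyGapDeriv (Icc_zero_entropyGapInflection_subset
      (Ioo_subset_Icc_self hx))).deriv]
    exact div_pos (sub_pos.2 hlt) (pow_pos ((log_pos one_lt_two).trans hlt) 3)
  simpa [entropyGapDeriv_zero] using
    hmono (left_mem_Icc.2 entropyGapInflection_mem.1.le) (Ioc_subset_Icc_self ht) ht.1

lemma entropyGap_pos_of_le {t : ℝ} (ht : t ∈ Ioc 0 t₀) : 0 < entropyGap t := by
  have hmono : StrictMonoOn entropyGap (Icc 0 t₀) := by
    refine strictMonoOn_of_deriv_pos (convex_Icc 0 _) continuous_entropyGap.continuousOn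
      fun x hx => ?_
    rw [interior_Icc] at hx
    rw [(hasDerivAt_entropyGap (Icc_zero_entropyGapInflection_subset
      (Ioo_subset_Icc_self hx))).deriv]
    exact entropyGapDeriv_pos ⟨hx.1, hx.2.le⟩
  simpa [entropyGap_zero] using
    hmono (left_mem_Icc.2 entropyGapInflection_mem.1.le) (Ioc_subset_Icc_self ht) ht.1

lemma strictConcaveOn_entropyGap : StrictConcaveOn ℝ (Icc t₀ 1) entropyGap := by
  refine strictConcaveOn_of_deriv2_neg (convex_Icc _ _) continuous_entropyGap.continuousOn
    fun x hx => ?_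
  rw [interior_Icc] at hx
  have hx' : x ∈ Ioo (-1 : ℝ) 1 := ⟨by linarith [hx.1, entropyGapInflection_mem.1], hx.2⟩
  have hderiv : deriv entropyGap =ᶠ[nhds x] entropyGapDeriv := by
    filter_upwards [isOpen_Ioo.mem_nhds hx'] with y hy using (hasDerivAt_entropyGap hy).deriv
  show deriv (deriv entropyGap) x < 0
  rw [hderiv.deriv_eq, (hasDerivAt_entropyGapDeriv hx').deriv]
  exact div_neg_of_neg_of_pos (sub_neg.2 (sqrt_one_sub_sq_lt_log_two ⟨hx.1, hx.2.le⟩))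
    (pow_pos (sqrt_pos.2 (by nlinarith [hx'.1, hx'.2])) 3)

lemma entropyGap_pos {t : ℝ} (ht : t ∈ Ioo 0 1) : 0 < entropyGap t := by
  rcases le_or_gt t t₀ with h | h
  · exact entropyGap_pos_of_le ⟨ht.1, h⟩
  · have h₀ := entropyGapInflection_mem
    have := strictConcaveOn_entropyGap.lt_on_openSegment (left_mem_Icc.2 h₀.2.le)
      (right_mem_Icc.2 h₀.2.le) h₀.2.ne (by rw [openSegment_eq_Ioo h₀.2]; exact ⟨h, ht.2⟩)
    rwa [entropyGap_one, min_eq_right (entropyGap_pos_of_le ⟨h₀.1, le_rfl⟩).le] at this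

lemma entropyGap_pos_of_ne_zero {t : ℝ} (h₀ : t ≠ 0) (h₁ : |t| < 1) : 0 < entropyGap t :=
  entropyGap_abs t ▸ entropyGap_pos ⟨abs_pos.2 h₀, h₁⟩

lemma entropyGap_eq_zero_iff {t : ℝ} (ht : |t| ≤ 1) : entropyGap t = 0 ↔ t = 0 ∨ |t| = 1 := by
  refine ⟨fun h => ?_, ?_⟩
  · by_contra! hne
    exact (entropyGap_pos_of_ne_zero hne.1 (ht.lt_of_ne hne.2)).ne' h
  · rintro (rfl | h)
    · exact entropyGap_zero
    · rw [← entropyGap_abs, h, entropyGap_one]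

lemma entropyGap_nonneg {t : ℝ} (ht : |t| ≤ 1) : 0 ≤ entropyGap t := by
  by_cases h : t = 0 ∨ |t| = 1
  · exact ((entropyGap_eq_zero_iff ht).2 h).ge
  · rw [not_or] at h
    exact (entropyGap_pos_of_ne_zero h.1 (ht.lt_of_ne h.2)).le

noncomputable def outputGap (a b : ℝ) : ℝ := (a + b) / 2 * entropyGap ((a - b) / (a + b))

lemma outputGap_eq {a b : ℝ} (hab : 0 ≤ a + b) :
    outputGap a b = log 2 * (√(a * b) + ((1/2) * a * logb 2 (a / ((1/2) * a + (1/2) * b))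
      + (1/2) * b * logb 2 (b / ((1/2) * a + (1/2) * b))) - ((1/2) * a + (1/2) * b)) := by
  rcases hab.eq_or_lt with hab | hab
  · obtain rfl : b = -a := by linarith
    simp [outputGap, sqrt_eq_zero', mul_self_nonneg]
  obtain ⟨m, t, hm, rfl, rfl⟩ : ∃ m t, 0 < m ∧ a = m * (1 + t) ∧ b = m * (1 - t) :=
    ⟨(a + b) / 2, (a - b) / (a + b), by positivity, by field_simp; ring, by field_simp; ring⟩
  have hsqrt : √(m * (1 + t) * (m * (1 - t))) = m * √(1 - t ^ 2) := by
    rw [show m * (1 + t) * (m * (1 - t)) = m ^ 2 * (1 - t ^ 2) by ring,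
      sqrt_mul (sq_nonneg m), sqrt_sq hm.le]
  have hmid : (1/2) * (m * (1 + t)) + (1/2) * (m * (1 - t)) = m := by ring
  have ht : (m * (1 + t) - m * (1 - t)) / (m * (1 + t) + m * (1 - t)) = t := by
    field_simp
    ring
  rw [outputGap, ht, hmid, hsqrt, mul_div_cancel_left₀ _ hm.ne', mul_div_cancel_left₀ _ hm.ne',
    logb, logb, entropyGap]
  field_simp
  ring

lemma abs_sub_div_add_le_one {a b : ℝ} (ha : 0 ≤ a) (hb : 0 ≤ b) : |(a - b) / (a + b)| ≤ 1 := by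
  rw [abs_div, abs_of_nonneg (add_nonneg ha hb)]
  exact div_le_one_of_le₀ (abs_sub_le_iff.2 ⟨by linarith, by linarith⟩) (add_nonneg ha hb)

lemma outputGap_nonneg {a b : ℝ} (ha : 0 ≤ a) (hb : 0 ≤ b) : 0 ≤ outputGap a b :=
  mul_nonneg (by positivity) (entropyGap_nonneg (abs_sub_div_add_le_one ha hb))

lemma outputGap_eq_zero_iff {a b : ℝ} (ha : 0 ≤ a) (hb : 0 ≤ b) :
    outputGap a b = 0 ↔ a * b = 0 ∨ a = b := by
  rcases (add_nonneg ha hb).eq_or_lt with hab | hab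
  · obtain ⟨rfl, rfl⟩ : a = 0 ∧ b = 0 := ⟨by linarith, by linarith⟩
    simp [outputGap]
  rw [outputGap, mul_eq_zero, or_iff_right (by positivity),
    entropyGap_eq_zero_iff (abs_sub_div_add_le_one ha hb), abs_eq zero_le_one,
    div_eq_zero_iff, or_iff_left hab.ne', div_eq_one_iff_eq hab.ne', div_eq_iff hab.ne',
    sub_eq_zero, mul_eq_zero]
  grind

lemma log_two_mul_bhat_add_symCap_sub_one (W : Fin 2 → Y → ℝ) (hnn : ∀ x y, 0 ≤ W x y)
    (hsum : ∀ x, ∑ y, W x y = 1) :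
    log 2 * (bhat W + symCap W - 1) = ∑ y, outputGap (W 0 y) (W 1 y) := by
  have hmass : ∑ y, ((1/2) * W 0 y + (1/2) * W 1 y) = 1 := by
    rw [Finset.sum_add_distrib, ← Finset.mul_sum, ← Finset.mul_sum, hsum, hsum]
    norm_num
  simp only [outputGap_eq (add_nonneg (hnn 0 _) (hnn 1 _)), ← Finset.mul_sum,
    Finset.sum_sub_distrib, Finset.sum_add_distrib, hmass, bhat, symCap, Fin.sum_univ_two]

theorem Z_eq_one_sub_I_iff_BEC_general (W : Fin 2 → Y → ℝ)
    (hnn : ∀ x y, 0 ≤ W x y) (hsum : ∀ x, ∑ y, W x y = 1) :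
    bhat W = 1 - symCap W ↔ ∀ y, W 0 y * W 1 y = 0 ∨ W 0 y = W 1 y := by
  have hgap : bhat W = 1 - symCap W ↔ ∑ y, outputGap (W 0 y) (W 1 y) = 0 := by
    rw [← log_two_mul_bhat_add_symCap_sub_one W hnn hsum, mul_eq_zero,
      or_iff_right (log_pos one_lt_two).ne', sub_eq_zero, eq_sub_iff_add_eq]
  rw [hgap, Finset.sum_eq_zero_iff_of_nonneg fun y _ => outputGap_nonneg (hnn 0 y) (hnn 1 y)]
  simp only [Finset.mem_univ, true_implies, outputGap_eq_zero_iff (hnn 0 _) (hnn 1 _)]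

theorem Z_eq_one_sub_I_iff_BEC (W : Fin 2 → Y → ℝ)
    (hnn : ∀ x y, 0 ≤ W x y) (hsum : ∀ x, ∑ y, W x y = 1)
    (hpos : ∀ y, 0 < W 0 y + W 1 y) :
    bhat W = 1 - symCap W ↔ ∀ y, W 0 y * W 1 y = 0 ∨ W 0 y = W 1 y :=
  Z_eq_one_sub_I_iff_BEC_general W hnn hsum
end
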